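/- arXiv:1608.06890 — 2 statements merged into one kernel-verified Lean document; each statement's English description precedes it below -/
import Mathlib

section
/- For every 0 < α < 1, the function φ on ℂ \ {0,1} defined by φ(x) = |x-1|^{-2α} · |x/|x| - 1|² satisfies φ(x) ≤ 4 for all x in its domain. -/
/-!
Write `r = ‖x - 1‖` and `t = ‖x/‖x‖ - 1‖`. Since `‖x/‖x‖ - x‖ = |1 - ‖x‖| ≤ r`, the triangle
inequality through `x` gives `t ≤ 2r`; trivially also `t ≤ 2`. Hence
`r^{-2α} t² ≤ 4 r^{2-2α} ≤ 4` when `r ≤ 1`, and `r^{-2α} t² ≤ t² ≤ 4` when `r ≥ 1`.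
-/

namespace NormedSpace

variable {V : Type*} [NormedAddCommGroup V] [NormedSpace ℝ V]

lemma norm_normalize_le_one (x : V) : ‖normalize x‖ ≤ 1 := by
  rcases eq_or_ne x 0 with rfl | hx
  · simp [normalize_zero_eq_zero]
  · exact (norm_normalize_eq_one_iff.mpr hx).le

lemma norm_normalize_sub_self_le (x : V) : ‖normalize x - x‖ ≤ |1 - ‖x‖| := by
  rcases eq_or_ne x 0 with rfl | hx
  · simp [normalize_zero_eq_zero]
  have hx' : 0 < ‖x‖ := norm_pos_iff.mpr hx
  have hscale : (‖x‖⁻¹ - 1) * ‖x‖ = 1 - ‖x‖ := by field_simp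
  refine le_of_eq ?_
  calc ‖normalize x - x‖ = ‖(‖x‖⁻¹ - 1) • x‖ := by
        rw [normalize, sub_smul, one_smul]
    _ = |1 - ‖x‖| := by rw [norm_smul, Real.norm_eq_abs, ← hscale, abs_mul, abs_of_pos hx']

lemma norm_normalize_sub_le_two (x : V) {u : V} (hu : ‖u‖ = 1) : ‖normalize x - u‖ ≤ 2 := by
  calc ‖normalize x - u‖ ≤ ‖normalize x‖ + ‖u‖ := norm_sub_le _ _
    _ ≤ 2 := by linarith [norm_normalize_le_one x]

lemma norm_normalize_sub_le_two_mul (x : V) {u : V} (hu : ‖u‖ = 1) :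
    ‖normalize x - u‖ ≤ 2 * ‖x - u‖ := by
  have hradial : |1 - ‖x‖| ≤ ‖x - u‖ := by
    simpa [hu, abs_sub_comm] using abs_norm_sub_norm_le x u
  calc ‖normalize x - u‖ ≤ ‖normalize x - x‖ + ‖x - u‖ :=
        norm_sub_le_norm_sub_add_norm_sub _ _ _
    _ ≤ 2 * ‖x - u‖ := by linarith [norm_normalize_sub_self_le x]

end NormedSpace

lemma Complex.div_ofReal_norm_eq_normalize (x : ℂ) : x / (‖x‖ : ℂ) = NormedSpace.normalize x := by
  rw [NormedSpace.normalize, Complex.real_smul, Complex.ofReal_inv, div_eq_inv_mul]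

lemma Real.rpow_neg_two_mul_mul_sq_le {r t c α : ℝ} (hr : 0 ≤ r) (ht : 0 ≤ t)
    (htc : t ≤ c) (htr : t ≤ c * r) (hα₀ : 0 ≤ α) (hα₁ : α ≤ 1) :
    r ^ (-(2 * α)) * t ^ 2 ≤ c ^ 2 := by
  have hc : 0 ≤ c := ht.trans htc
  rcases hr.eq_or_lt with rfl | hr
  · have : t = 0 := le_antisymm (by simpa using htr) ht
    simp [this, sq_nonneg]
  rcases le_or_gt r 1 with hr₁ | hr₁
  · calc r ^ (-(2 * α)) * t ^ 2 ≤ r ^ (-(2 * α)) * (c ^ 2 * r ^ (2 : ℝ)) := by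
          rw [Real.rpow_two, ← mul_pow]
          gcongr
      _ = c ^ 2 * r ^ (2 - 2 * α) := by
          rw [mul_left_comm, ← Real.rpow_add hr]
          ring_nf
      _ ≤ c ^ 2 * 1 := by
          gcongr
          exact Real.rpow_le_one hr.le hr₁ (by linarith)
      _ = c ^ 2 := mul_one _
  · calc r ^ (-(2 * α)) * t ^ 2 ≤ 1 * c ^ 2 := by
          gcongr
          exact Real.rpow_le_one_of_one_le_of_nonpos hr₁.le (by linarith)
      _ = c ^ 2 := one_mul _

theorem stmt_1_general (α : ℝ) (hα : 0 < α) (hα1 : α < 1) (x : ℂ) :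
    ‖x - 1‖ ^ (-(2 * α)) * ‖x / (‖x‖ : ℂ) - 1‖ ^ 2 ≤ 4 := by
  rw [Complex.div_ofReal_norm_eq_normalize]
  calc _ ≤ (2 : ℝ) ^ 2 :=
        Real.rpow_neg_two_mul_mul_sq_le (norm_nonneg _) (norm_nonneg _)
          (NormedSpace.norm_normalize_sub_le_two x norm_one)
          (NormedSpace.norm_normalize_sub_le_two_mul x norm_one) hα.le hα1.le
    _ = 4 := by norm_num

theorem stmt_1 (α : ℝ) (hα : 0 < α) (hα1 : α < 1) (x : ℂ) (hx0 : x ≠ 0) (hx1 : x ≠ 1) :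
    ‖x - 1‖ ^ (-(2 * α)) * ‖x / (‖x‖ : ℂ) - 1‖ ^ 2 ≤ 4 :=
  stmt_1_general α hα hα1 x
end

section
/- Let 0 < α, β < 1 and let f̃ : ℂ → ℂ be α-Hölder continuous with constant C. Define h(z) = |z|^{2β-2}(f̃(|z|^{β-1}z) - f̃(0)) for z ≠ 0. Then for any z with 0 < |z| < 1/6 and any x, y in the disc B' of center z and radius |z|/2, one has |h(x) - h(y)| ≤ C'|z|^{2β-2+αβ} for a constant C' depending only on C, α, β. -/
/-!
No cancellation between `h x` and `h y` is needed. Since `‖|w|^(β-1) w‖ = |w|^β`, Hölder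
continuity of `f` gives `|h w| ≤ C |w|^(2β-2+αβ)`. On the disc `B'` the modulus `|w|` lies
between `|z|/2` and `2|z|`, so this is at most `C 2^|2β-2+αβ| |z|^(2β-2+αβ)`. The triangle
inequality then bounds `|h x - h y|`.
-/

open Metric

lemma norm_mem_Icc_of_mem_closedBall_half {E : Type*} [SeminormedAddCommGroup E] {z w : E}
    (hw : w ∈ closedBall z (‖z‖ / 2)) : ‖z‖ / 2 ≤ ‖w‖ ∧ ‖w‖ ≤ 2 * ‖z‖ := by
  rw [mem_closedBall, dist_eq_norm] at hw
  have h₁ := norm_sub_norm_le z w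
  have h₂ := norm_sub_norm_le w z
  rw [norm_sub_rev] at h₁
  constructor <;> linarith [norm_nonneg z]

lemma rpow_le_two_rpow_abs_mul_rpow {a b : ℝ} (e : ℝ) (ha : 0 < a) (hab : a / 2 ≤ b)
    (hba : b ≤ 2 * a) : b ^ e ≤ 2 ^ |e| * a ^ e := by
  rcases le_or_gt 0 e with he | he
  · calc b ^ e ≤ (2 * a) ^ e := Real.rpow_le_rpow (by linarith) hba he
      _ = 2 ^ |e| * a ^ e := by rw [abs_of_nonneg he, Real.mul_rpow zero_le_two ha.le]
  · calc b ^ e ≤ (a / 2) ^ e := Real.rpow_le_rpow_of_nonpos (by positivity) hab he.le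
      _ = 2 ^ |e| * a ^ e := by
        rw [abs_of_neg he, Real.div_rpow ha.le zero_le_two, Real.rpow_neg zero_le_two,
          div_eq_inv_mul]

lemma norm_ofReal_rpow_sub_one_mul_self (β : ℝ) {w : ℂ} (hw : w ≠ 0) :
    ‖((‖w‖ ^ (β - 1) : ℝ) : ℂ) * w‖ = ‖w‖ ^ β := by
  rw [norm_mul, Complex.norm_real, Real.norm_of_nonneg (by positivity),
    ← Real.rpow_add_one (norm_ne_zero_iff.2 hw), sub_add_cancel]

lemma norm_rescaled_sub_le {α β C : ℝ} {f : ℂ → ℂ}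
    (hf : ∀ x y : ℂ, ‖f x - f y‖ ≤ C * dist x y ^ α) {w : ℂ} (hw : w ≠ 0) :
    ‖((‖w‖ ^ (2 * β - 2) : ℝ) : ℂ) * (f (((‖w‖ ^ (β - 1) : ℝ) : ℂ) * w) - f 0)‖ ≤
      C * ‖w‖ ^ (2 * β - 2 + α * β) := by
  have hw' : 0 < ‖w‖ := norm_pos_iff.2 hw
  calc _ = ‖w‖ ^ (2 * β - 2) * ‖f (((‖w‖ ^ (β - 1) : ℝ) : ℂ) * w) - f 0‖ := by
        rw [norm_mul, Complex.norm_real, Real.norm_of_nonneg (by positivity)]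
    _ ≤ ‖w‖ ^ (2 * β - 2) * (C * (‖w‖ ^ β) ^ α) := by
        gcongr
        simpa only [dist_zero_right, norm_ofReal_rpow_sub_one_mul_self β hw] using
          hf (((‖w‖ ^ (β - 1) : ℝ) : ℂ) * w) 0
    _ = C * ‖w‖ ^ (2 * β - 2 + α * β) := by
        rw [← Real.rpow_mul hw'.le, mul_comm β α, Real.rpow_add hw']
        ring

theorem stmt_11_general (α β C : ℝ)
    (hC : 0 ≤ C) (f : ℂ → ℂ)
    (hf : ∀ x y : ℂ, ‖f x - f y‖ ≤ C * dist x y ^ α) :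
    ∃ C' : ℝ, ∀ z : ℂ, 0 < ‖z‖ → ‖z‖ < 1 / 6 →
      ∀ x ∈ Metric.closedBall z (‖z‖ / 2),
        ∀ y ∈ Metric.closedBall z (‖z‖ / 2),
          ‖((‖x‖ ^ (2 * β - 2) : ℝ) : ℂ) *
                (f (((‖x‖ ^ (β - 1) : ℝ) : ℂ) * x) - f 0) -
              ((‖y‖ ^ (2 * β - 2) : ℝ) : ℂ) *
                (f (((‖y‖ ^ (β - 1) : ℝ) : ℂ) * y) - f 0)‖ ≤
            C' * ‖z‖ ^ (2 * β - 2 + α * β) := by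
  set e := 2 * β - 2 + α * β
  refine ⟨2 * (C * 2 ^ |e|), fun z hz _ x hx y hy => ?_⟩
  have bound : ∀ w ∈ closedBall z (‖z‖ / 2),
      ‖((‖w‖ ^ (2 * β - 2) : ℝ) : ℂ) * (f (((‖w‖ ^ (β - 1) : ℝ) : ℂ) * w) - f 0)‖ ≤
        C * 2 ^ |e| * ‖z‖ ^ e := by
    intro w hw
    obtain ⟨hw₁, hw₂⟩ := norm_mem_Icc_of_mem_closedBall_half hw
    have hw₀ : w ≠ 0 := norm_pos_iff.1 (by linarith)
    calc _ ≤ C * ‖w‖ ^ e := norm_rescaled_sub_le hf hw₀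
      _ ≤ C * (2 ^ |e| * ‖z‖ ^ e) := by
        gcongr
        exact rpow_le_two_rpow_abs_mul_rpow e hz hw₁ hw₂
      _ = C * 2 ^ |e| * ‖z‖ ^ e := by ring
  calc _ ≤ _ + _ := norm_sub_le _ _
    _ ≤ _ := by linarith [bound x hx, bound y hy]

theorem stmt_11 (α β C : ℝ) (hα : 0 < α) (hα1 : α < 1) (hβ : 0 < β) (hβ1 : β < 1)
    (hC : 0 ≤ C) (f : ℂ → ℂ)
    (hf : ∀ x y : ℂ, ‖f x - f y‖ ≤ C * dist x y ^ α) :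
    ∃ C' : ℝ, ∀ z : ℂ, 0 < ‖z‖ → ‖z‖ < 1 / 6 →
      ∀ x ∈ Metric.closedBall z (‖z‖ / 2),
        ∀ y ∈ Metric.closedBall z (‖z‖ / 2),
          ‖((‖x‖ ^ (2 * β - 2) : ℝ) : ℂ) *
                (f (((‖x‖ ^ (β - 1) : ℝ) : ℂ) * x) - f 0) -
              ((‖y‖ ^ (2 * β - 2) : ℝ) : ℂ) *
                (f (((‖y‖ ^ (β - 1) : ℝ) : ℂ) * y) - f 0)‖ ≤
            C' * ‖z‖ ^ (2 * β - 2 + α * β) :=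
  stmt_11_general α β C hC f hf
end
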